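/- Let C̄ be an F_q-conic of PG(2,q^3). Then in the (usual, not exact-at-infinity) Bruck–Bose representation in PG(6,q), the corresponding set [C] is a k-dimensional normal rational curve, where k ∈ {2, 3, 4, 6}. -/

import Mathlib

/-!
Common set-up: an explicit model of the Bruck-Bose representation of PG(2,q^3) in PG(6,q),
of the Bose representation of PG(2,q^3) in PG(8,q), and of their cubic and sextic
field extensions.

`Fq`, `F3`, `F6` are the fields of orders `q`, `q^3`, `q^6`.

* PG(2,q^3) is `Projectivization F3 (Fin 3 → F3)`, with line at infinity `z = 0`.
* The ambient 7-dimensional `Fq`-space of PG(6,q) is `V6 = (Fin 2 → F3) × Fq`.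
  Its extensions to `F3` and `F6` are modelled blockwise using the Galois splitting
  `F3 ⊗ F3 ≅ F3 × F3 × F3`:  `V63 = (Fin 3 → Fin 2 → F3) × F3` and
  `V66 = (Fin 3 → Fin 2 → F6) × F6`, with the Frobenius collineation acting by a cyclic
  shift of the blocks composed with coordinatewise q-th powers (`tauBB`).
* The hyperplane at infinity is `{v | v.2 = 0}`; the regular 2-spread consists of
  the planes `{(l•(x,y),0) | l ∈ F3}`, whose extensions meet the transversal lines:
  the transversal line `g^{q^e}` is the set of vectors `gBlockVec e a b`.
* Similarly PG(8,q) has ambient `Fq`-space `Fin 3 → F3` with extensions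
  `Fin 3 → Fin 3 → K` (`K = F3, F6`), the Bose spread plane of a point `(x:y:z)` being
  `{l•(x,y,z)}`; the transversal plane `Γ^{q^e}` is the block `e` (`GammaPlane e`),
  and a point `X̄ = (x:y:z)` of PG(2,q^3) corresponds to the point of `Γ` with vector
  `blockVec 0 ![x,y,z]`.
-/

noncomputable section
open scoped Classical

/-- The projective point `P` is represented, up to a nonzero scalar, by the vector `w`. -/
def pe {K V : Type*} [DivisionRing K] [AddCommGroup V] [Module K V]
    (P : Projectivization K V) (w : V) : Prop :=
  ∃ c : K, c ≠ 0 ∧ P.rep = c • w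

/-- `v ↦ B ⬝ v^q`, the vector form of a collineation `X ↦ B X^q`. -/
def cpiVec (q : ℕ) {K : Type*} [Field K] (B : Matrix (Fin 3) (Fin 3) K)
    (v : Fin 3 → K) : Fin 3 → K :=
  B.mulVec fun i => v i ^ q

/-- `v ↦ D ⬝ v^q` on a line (pairs of coordinates). -/
def cbVec (q : ℕ) {K : Type*} [Field K] (D : Matrix (Fin 2) (Fin 2) K)
    (v : Fin 2 → K) : Fin 2 → K :=
  D.mulVec fun i => v i ^ q

/-- The vector of the Bruck-Bose ambient extension placing the pair `(a,b)` in
Galois block `e` (a vector on the transversal line `g^{q^e}`). -/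
def gBlockVec {K : Type*} [Zero K] (e : Fin 3) (a b : K) : (Fin 3 → Fin 2 → K) × K :=
  (fun e' => if e' = e then ![a, b] else 0, 0)

/-- The Frobenius collineation `X ↦ X^q` on (extensions of) the Bruck-Bose ambient space. -/
def tauBB (q : ℕ) {K : Type*} [Field K] (w : (Fin 3 → Fin 2 → K) × K) :
    (Fin 3 → Fin 2 → K) × K :=
  (fun e k => w.1 (e - 1) k ^ q, w.2 ^ q)

/-- The vector of the Bose ambient extension placing `u` in Galois block `e`. -/
def blockVec {K : Type*} [Zero K] (e : Fin 3) (u : Fin 3 → K) : Fin 3 → Fin 3 → K :=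
  fun e' => if e' = e then u else 0

/-- The Frobenius collineation `X ↦ X^q` on (extensions of) the Bose ambient space. -/
def tauBose (q : ℕ) {K : Type*} [Field K] (w : Fin 3 → Fin 3 → K) : Fin 3 → Fin 3 → K :=
  fun e i => w (e - 1) i ^ q

/-- The transversal plane `Γ^{q^e}` of the Bose spread (as a set of vectors). -/
def GammaPlane {K : Type*} [Zero K] (e : Fin 3) : Set (Fin 3 → Fin 3 → K) :=
  {w | ∀ e', e' ≠ e → w e' = 0}

/-- The scroll plane `⟪X⟫_π = ⟨X, (X^{c_π^5})^q, (X^{c_π^4})^{q^2}⟩` of the point `X ∈ Γ`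
(or `Γ^{extension}`) with `Γ`-coordinate vector `u`, where `c_π` is given by the matrix `B`. -/
def scrollSub (q : ℕ) {K : Type*} [Field K] (B : Matrix (Fin 3) (Fin 3) K)
    (u : Fin 3 → K) : Submodule K (Fin 3 → Fin 3 → K) :=
  Submodule.span K
    {blockVec 0 u,
     blockVec 1 (fun i => ((cpiVec q B)^[5] u) i ^ q),
     blockVec 2 (fun i => ((cpiVec q B)^[4] u) i ^ q ^ 2)}

/-- The `b`-scroll plane `⟪X⟫_b = ⟨X, (X^{c_b^5})^q, (X^{c_b^4})^{q^2}⟩` of the point `X` of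
the transversal line `g` (or its extension) with coordinate pair `(a,b)`, where `c_b` is
given by the matrix `D`. -/
def bScrollSub (q : ℕ) {K : Type*} [Field K] (D : Matrix (Fin 2) (Fin 2) K)
    (a b : K) : Submodule K ((Fin 3 → Fin 2 → K) × K) :=
  Submodule.span K
    {gBlockVec 0 a b,
     gBlockVec 1 (((cbVec q D)^[5] ![a, b]) 0 ^ q) (((cbVec q D)^[5] ![a, b]) 1 ^ q),
     gBlockVec 2 (((cbVec q D)^[4] ![a, b]) 0 ^ q ^ 2) (((cbVec q D)^[4] ![a, b]) 1 ^ q ^ 2)}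

/-- `S` is a single point lying on one of the transversal planes (a T-point). -/
def IsTPointSet {K : Type*} [Field K]
    (S : Set (Projectivization K (Fin 3 → Fin 3 → K))) : Prop :=
  ∃ w : Fin 3 → Fin 3 → K, w ≠ 0 ∧ (∃ e, w ∈ GammaPlane e) ∧ S = {P | pe P w}

/-- `S` is the point set of a T-line: a line meeting two of the transversal planes. -/
def IsTLineSet {K : Type*} [Field K]
    (S : Set (Projectivization K (Fin 3 → Fin 3 → K))) : Prop :=
  ∃ (e e' : Fin 3) (u u' : Fin 3 → Fin 3 → K), e ≠ e' ∧ u ≠ 0 ∧ u' ≠ 0 ∧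
    u ∈ GammaPlane e ∧ u' ∈ GammaPlane e' ∧
    S = {P | ∃ s t : K, P.rep = s • u + t • u'}

/-- `S` is the point set of a T-plane: a plane meeting all three transversal planes. -/
def IsTPlaneSet {K : Type*} [Field K]
    (S : Set (Projectivization K (Fin 3 → Fin 3 → K))) : Prop :=
  ∃ u : Fin 3 → Fin 3 → Fin 3 → K, (∀ e, u e ∈ GammaPlane e) ∧ LinearIndependent K u ∧
    S = {P | P.rep ∈ Submodule.span K (Set.range u)}

/-- `S` is empty, a T-point, a T-line or a T-plane. -/
def TClass {K : Type*} [Field K]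
    (S : Set (Projectivization K (Fin 3 → Fin 3 → K))) : Prop :=
  S = ∅ ∨ IsTPointSet S ∨ IsTLineSet S ∨ IsTPlaneSet S

/-- `ζ` : the linear embedding of the (extended) Bruck-Bose ambient space into the
(extended) Bose ambient space, realising PG(6,q) as the 6-space `Σ_{6,q}` of PG(8,q). -/
def zetaBB {K : Type*} [Field K] (w : (Fin 3 → Fin 2 → K) × K) : Fin 3 → Fin 3 → K :=
  fun e => ![w.1 e 0, w.1 e 1, w.2]

section BruckBose

variable (Fq F3 F6 : Type) [Field Fq] [Field F3] [Field F6]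
  [Fintype Fq] [Fintype F3] [Fintype F6]
  [Algebra Fq F3] [Algebra F3 F6] [Algebra Fq F6] [IsScalarTower Fq F3 F6]

/-- The points of `PG(2,q^3)`. -/
abbrev Pt2 := Projectivization F3 (Fin 3 → F3)

/-- The points of the quadratic extension `PG(2,q^6)`. -/
abbrev Pt2e := Projectivization F6 (Fin 3 → F6)

/-- The line at infinity `ℓ∞` of `PG(2,q^3)`. -/
def linf : Set (Pt2 F3) := {P | P.rep 2 = 0}

/-- The extended line at infinity `ℓ∞⁺⁺` of `PG(2,q^6)`. -/
def linfe : Set (Pt2e F6) := {P | P.rep 2 = 0}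

/-- Representing vectors of the image under `M` of the standard `F_q`-subplane. -/
def subplaneVecs (M : Matrix (Fin 3) (Fin 3) F3) : Set (Fin 3 → F3) :=
  {u | ∃ a : Fin 3 → Fq, u = M.mulVec fun i => algebraMap Fq F3 (a i)}

/-- The `F_q`-subplane `π̄` of `PG(2,q^3)` determined by the invertible matrix `M`:
the image under `M` of the standard rational subplane.  (Every `F_q`-subplane arises
in this way.) -/
def subplaneOf (M : Matrix (Fin 3) (Fin 3) F3) : Set (Pt2 F3) :=
  {P | ∃ u ∈ subplaneVecs Fq F3 M, pe P u}

/-- Representing vectors of the image under `M` of the standard `F_q`-conic. -/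
def conicVecs (M : Matrix (Fin 3) (Fin 3) F3) : Set (Fin 3 → F3) :=
  {u | (∃ θ : Fq, u = M.mulVec fun i => algebraMap Fq F3 (![1, θ, θ ^ 2] i)) ∨
    u = M.mulVec ![0, 0, 1]}

/-- The `F_q`-conic `C̄` of `PG(2,q^3)` determined by the invertible matrix `M`: the image
under `M` of the standard conic of the standard rational subplane.  (Every `F_q`-conic of
an `F_q`-subplane arises this way.) -/
def conicOf (M : Matrix (Fin 3) (Fin 3) F3) : Set (Pt2 F3) :=
  {P | ∃ u ∈ conicVecs Fq F3 M, pe P u}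

/-- Representing vectors of `C̄⁺`, the unique `F_{q^3}`-conic containing `C̄ = conicOf M`. -/
def conicPlusVecs (M : Matrix (Fin 3) (Fin 3) F3) : Set (Fin 3 → F3) :=
  {u | (∃ θ : F3, u = M.mulVec ![1, θ, θ ^ 2]) ∨ u = M.mulVec ![0, 0, 1]}

/-- `C̄⁺`, the unique non-degenerate conic of `PG(2,q^3)` containing `C̄ = conicOf M`. -/
def conicPlusOf (M : Matrix (Fin 3) (Fin 3) F3) : Set (Pt2 F3) :=
  {P | ∃ u ∈ conicPlusVecs F3 M, pe P u}

/-- Representing vectors of `C̄⁺⁺`, the unique conic of `PG(2,q^6)` containing `C̄⁺`. -/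
def conicPPVecs (M : Matrix (Fin 3) (Fin 3) F3) : Set (Fin 3 → F6) :=
  {u | (∃ θ : F6, u = (M.map (algebraMap F3 F6)).mulVec ![1, θ, θ ^ 2]) ∨
    u = (M.map (algebraMap F3 F6)).mulVec ![0, 0, 1]}

/-- `C̄⁺⁺`, the unique conic of the quadratic extension `PG(2,q^6)` containing `C̄⁺`. -/
def conicPPOf (M : Matrix (Fin 3) (Fin 3) F3) : Set (Pt2e F6) :=
  {P | ∃ u ∈ conicPPVecs F3 F6 M, pe P u}

/-- The subplane determined by `M` is secant to `ℓ∞` (meets it in `q+1` points). -/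
def SecantSubplane (M : Matrix (Fin 3) (Fin 3) F3) : Prop :=
  (subplaneOf Fq F3 M ∩ linf F3).ncard = Fintype.card Fq + 1

/-- The subplane determined by `M` is tangent to `ℓ∞` (meets it in exactly one point). -/
def TangentSubplane (M : Matrix (Fin 3) (Fin 3) F3) : Prop :=
  (subplaneOf Fq F3 M ∩ linf F3).ncard = 1

/-- The subplane determined by `M` is exterior to `ℓ∞` (disjoint from it). -/
def ExteriorSubplane (M : Matrix (Fin 3) (Fin 3) F3) : Prop :=
  subplaneOf Fq F3 M ∩ linf F3 = ∅

/-- The collineation `X ↦ B X^q` is a generator of the unique order-3 collineation group of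
`PG(2,q^3)` fixing the subplane `subplaneOf M` pointwise (i.e. it is `c̄_π` or `c̄_π²`). -/
def IsCpiGen (M B : Matrix (Fin 3) (Fin 3) F3) : Prop :=
  IsUnit B.det ∧
  (∀ P ∈ subplaneOf Fq F3 M, pe P (cpiVec (Fintype.card Fq) B P.rep)) ∧
  (∀ P : Pt2 F3, pe P ((cpiVec (Fintype.card Fq) B)^[3] P.rep)) ∧
  (∃ P : Pt2 F3, ¬ pe P (cpiVec (Fintype.card Fq) B P.rep))

/-- The map `X ↦ D X^q` on `ℓ∞` (coordinatised by pairs) is a generator of the unique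
order-3 collineation group of `ℓ∞` fixing the `F_q`-subline `b̄ = subplaneOf M ∩ ℓ∞`
pointwise. -/
def IsCbGen (M : Matrix (Fin 3) (Fin 3) F3) (D : Matrix (Fin 2) (Fin 2) F3) : Prop :=
  IsUnit D.det ∧
  (∀ P ∈ subplaneOf Fq F3 M ∩ linf F3,
    ∃ c : F3, c ≠ 0 ∧
      cbVec (Fintype.card Fq) D ![P.rep 0, P.rep 1] = c • ![P.rep 0, P.rep 1]) ∧
  (∀ u : Fin 2 → F3, u ≠ 0 → ∃ c : F3, c ≠ 0 ∧ (cbVec (Fintype.card Fq) D)^[3] u = c • u) ∧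
  (∃ u : Fin 2 → F3, u ≠ 0 ∧ ¬ ∃ c : F3, c ≠ 0 ∧ cbVec (Fintype.card Fq) D u = c • u)

/-- `P' = P^{c̄_π}` where `c̄_π : X ↦ B X^q`. -/
def cptRel (B : Matrix (Fin 3) (Fin 3) F3) (P P' : Pt2 F3) : Prop :=
  pe P' (cpiVec (Fintype.card Fq) B P.rep)

/-- `E` is one of the two `(π̄,ℓ∞)`-carriers lying on `ℓ∞` (for `π̄` exterior to `ℓ∞`):
`E ∈ ℓ∞` and the image of `E` under `c̄_π` or `c̄_π²` again lies on `ℓ∞`. -/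
def IsCarrierOnLinf (B : Matrix (Fin 3) (Fin 3) F3) (E : Pt2 F3) : Prop :=
  E ∈ linf F3 ∧ ∃ E1 : Pt2 F3, cptRel Fq F3 B E E1 ∧ E1 ∈ linf F3

/-! ### The Bruck-Bose ambient spaces -/

/-- The 7-dimensional `Fq`-vector space underlying `PG(6,q)`. -/
abbrev V6 := (Fin 2 → F3) × Fq

/-- The points of `PG(6,q)`. -/
abbrev Pt6 := Projectivization Fq (V6 Fq F3)

/-- The cubic extension of `V6`, underlying `PG(6,q^3)`. -/
abbrev V63 := (Fin 3 → Fin 2 → F3) × F3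

/-- The points of `PG(6,q^3)`. -/
abbrev Pt63 := Projectivization F3 (V63 F3)

/-- The sextic extension of `V6`, underlying `PG(6,q^6)`. -/
abbrev V66 := (Fin 3 → Fin 2 → F6) × F6

/-- The points of `PG(6,q^6)`. -/
abbrev Pt66 := Projectivization F6 (V66 F6)

/-- The hyperplane at infinity `Σ∞` of `PG(6,q)` (as a point set). -/
def inf6 : Set (Pt6 Fq F3) := {P | P.rep.2 = 0}

/-- The extended hyperplane at infinity `Σ∞^*` in `PG(6,q^3)`. -/
def inf63 : Set (Pt63 F3) := {P | P.rep.2 = 0}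

/-- The extended hyperplane at infinity `Σ∞^☆` in `PG(6,q^6)`. -/
def inf66 : Set (Pt66 F6) := {P | P.rep.2 = 0}

/-- The vectors of the spread plane corresponding to the point `(x : y : 0)` of `ℓ∞`. -/
def spreadVecs (x y : F3) : Set (V6 Fq F3) := {v | ∃ l : F3, v = (![l * x, l * y], 0)}

/-- The points of the plane `[P]` of the regular 2-spread `S` corresponding to the
point `P̄ = (x : y : 0)` of `ℓ∞`. -/
def spreadPts (x y : F3) : Set (Pt6 Fq F3) := {P | P.rep ∈ spreadVecs Fq F3 x y}

/-- `s` is (the point set of) a plane of the regular 2-spread `S`. -/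
def IsSpreadPlane (s : Set (Pt6 Fq F3)) : Prop :=
  ∃ x y : F3, ¬(x = 0 ∧ y = 0) ∧ s = spreadPts Fq F3 x y

/-- The embedding of `V6` into its cubic extension `V63`. -/
def iota6 (v : V6 Fq F3) : V63 F3 :=
  (fun e k => v.1 k ^ Fintype.card Fq ^ (e : ℕ), algebraMap Fq F3 v.2)

/-- The embedding of `V6` into its sextic extension `V66`. -/
def iota66 (v : V6 Fq F3) : V66 F6 :=
  (fun e k => algebraMap F3 F6 (v.1 k ^ Fintype.card Fq ^ (e : ℕ)), algebraMap Fq F6 v.2)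

/-- The embedding of `V63` into `V66`. -/
def kappa6 (w : V63 F3) : V66 F6 :=
  (fun e k => algebraMap F3 F6 (w.1 e k), algebraMap F3 F6 w.2)

/-- A representing vector of `P^{q^e}` where `P` is the point of the transversal line `g`
with coordinate pair `(a,b) ∈ F_{q^3}²`. -/
def gOrbitVec3 (a b : F3) (e : Fin 3) : V63 F3 :=
  gBlockVec e (a ^ Fintype.card Fq ^ (e : ℕ)) (b ^ Fintype.card Fq ^ (e : ℕ))

/-- A representing vector of `P^{q^e}` where `P` is the point of the extended transversal
line `g^☆` with coordinate pair `(a,b) ∈ F_{q^6}²`. -/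
def gOrbitVec6 (a b : F6) (e : ℕ) : V66 F6 :=
  gBlockVec (Fin.ofNat 3 e) (a ^ Fintype.card Fq ^ e) (b ^ Fintype.card Fq ^ e)

/-- The vectors of the extension to `PG(6,q^3)` of the spread plane of `(x : y : 0)`. -/
def extSpreadVecs3 (x y : F3) : Set (V63 F3) :=
  {w | ∃ c : Fin 3 → F3, w = (fun e =>
    ![c e * x ^ Fintype.card Fq ^ (e : ℕ), c e * y ^ Fintype.card Fq ^ (e : ℕ)], 0)}

/-- The vectors of the extension to `PG(6,q^6)` of the spread plane of `(x : y : 0)`. -/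
def extSpreadVecs6 (x y : F3) : Set (V66 F6) :=
  {w | ∃ c : Fin 3 → F6, w = (fun e =>
    ![c e * algebraMap F3 F6 (x ^ Fintype.card Fq ^ (e : ℕ)),
      c e * algebraMap F3 F6 (y ^ Fintype.card Fq ^ (e : ℕ))], 0)}

/-- The point set in `PG(6,q)` of the `k`-dimensional normal rational curve with
parametrising vectors `v 0, …, v k`:  `{(1,θ,…,θ^k)} ∪ {(0,…,0,1)}` in the frame `v`. -/
def nrcPts6 {k : ℕ} (v : Fin (k + 1) → V6 Fq F3) : Set (Pt6 Fq F3) :=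
  {P | (∃ θ : Fq, pe P (∑ i : Fin (k + 1), θ ^ (i : ℕ) • v i)) ∨ pe P (v (Fin.last k))}

/-- The point set in `PG(6,q^3)` of the extension of the normal rational curve `v`. -/
def nrcPts63 {k : ℕ} (v : Fin (k + 1) → V6 Fq F3) : Set (Pt63 F3) :=
  {P | (∃ θ : F3, pe P (∑ i : Fin (k + 1), θ ^ (i : ℕ) • iota6 Fq F3 (v i))) ∨
    pe P (iota6 Fq F3 (v (Fin.last k)))}

/-- The point set in `PG(6,q^6)` of the extension of the normal rational curve `v`. -/
def nrcPts66 {k : ℕ} (v : Fin (k + 1) → V6 Fq F3) : Set (Pt66 F6) :=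
  {P | (∃ θ : F6, pe P (∑ i : Fin (k + 1), θ ^ (i : ℕ) • iota66 Fq F3 F6 (v i))) ∨
    pe P (iota66 Fq F3 F6 (v (Fin.last k)))}

/-- `N` is a `k`-dimensional normal rational curve of `PG(6,q)`. -/
def IsNRC (k : ℕ) (N : Set (Pt6 Fq F3)) : Prop :=
  ∃ v : Fin (k + 1) → V6 Fq F3, LinearIndependent Fq v ∧ N = nrcPts6 Fq F3 v

/-- The exact-at-infinity Bruck-Bose representation `[C]` of a point set `C` of
`PG(2,q^3)`: affine points go to affine points, and a point of `ℓ∞` goes to the whole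
corresponding spread plane. -/
def bbExact (C : Set (Pt2 F3)) : Set (Pt6 Fq F3) :=
  {Q | ∃ P ∈ C, (∃ x y : F3, pe P ![x, y, 1] ∧ pe Q (![x, y], (1 : Fq))) ∨
    (∃ x y : F3, pe P ![x, y, 0] ∧ Q ∈ spreadPts Fq F3 x y)}

/-- `N` is the Bruck-Bose representation (usual convention: linear components at infinity
ignored) of the point set `C` of `PG(2,q^3)`: `N` is contained in the exact-at-infinity
representation of `C` and contains all of its affine points. -/
def corrBB (C : Set (Pt2 F3)) (N : Set (Pt6 Fq F3)) : Prop :=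
  N ⊆ bbExact Fq F3 C ∧ ∀ Q ∈ bbExact Fq F3 C, Q ∉ inf6 Fq F3 → Q ∈ N

/-! ### The Bose ambient spaces -/

/-- The points of `PG(8,q^3)`. -/
abbrev Pt93 := Projectivization F3 (Fin 3 → Fin 3 → F3)

/-- The points of `PG(8,q^6)`. -/
abbrev Pt96 := Projectivization F6 (Fin 3 → Fin 3 → F6)

/-- The vectors of `Π_g^* = ⟨g, g^q, g^{q^2}⟩` in `PG(8,q^3)`, where `g` is the line of the
transversal plane `Γ` corresponding to the line `l` of `PG(2,q^3)`. -/
def PiG3 (l : Submodule F3 (Fin 3 → F3)) : Set (Fin 3 → Fin 3 → F3) :=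
  {w | ∀ e : Fin 3, ∃ v ∈ l, w e = fun i => v i ^ Fintype.card Fq ^ (e : ℕ)}

/-- The vectors of `Π_g^☆` in `PG(8,q^6)`. -/
def PiG6 (l : Submodule F3 (Fin 3 → F3)) : Set (Fin 3 → Fin 3 → F6) :=
  {w | ∀ e : Fin 3, w e ∈ Submodule.span F6
    {u : Fin 3 → F6 | ∃ v ∈ l, u = fun i => algebraMap F3 F6 (v i) ^ Fintype.card Fq ^ (e : ℕ)}}

/-- The extension to `PG(2,q^6)` of the line `l` of `PG(2,q^3)`. -/
def extLineF6 (l : Submodule F3 (Fin 3 → F3)) : Submodule F6 (Fin 3 → F6) :=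
  Submodule.span F6 {u | ∃ v ∈ l, u = fun i => algebraMap F3 F6 (v i)}

/-- The vectors of the point set of `V(⟦C⟧)^*` in `PG(8,q^3)` for the `F_q`-conic of `M`:
the union of the `π`-scroll planes of the points of `C⁺` (with `c_π` given by `B`). -/
def boseVar3 (M B : Matrix (Fin 3) (Fin 3) F3) : Set (Fin 3 → Fin 3 → F3) :=
  {w | ∃ u ∈ conicPlusVecs F3 M, w ∈ scrollSub (Fintype.card Fq) B u}

/-- The vectors of the point set of `V(⟦C⟧)^☆` in `PG(8,q^6)`: the union of the
`π`-scroll planes of the points of `C⁺⁺`. -/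
def boseVar6 (M B : Matrix (Fin 3) (Fin 3) F3) : Set (Fin 3 → Fin 3 → F6) :=
  {w | ∃ u ∈ conicPPVecs F3 F6 M,
    w ∈ scrollSub (Fintype.card Fq) (B.map (algebraMap F3 F6)) u}

/-- The point set of the variety-extension `V([C])^*` in `PG(6,q^3)`:
`V(⟦C⟧)^* ∩ Σ_{6,q}^*`, transported to the Bruck-Bose model via `ζ`. -/
def bbVar3 (M B : Matrix (Fin 3) (Fin 3) F3) : Set (Pt63 F3) :=
  {P | zetaBB P.rep ∈ boseVar3 Fq F3 M B}

/-- The point set of the variety-extension `V([C])^☆` in `PG(6,q^6)`. -/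
def bbVar6 (M B : Matrix (Fin 3) (Fin 3) F3) : Set (Pt66 F6) :=
  {P | zetaBB P.rep ∈ boseVar6 Fq F3 F6 M B}

/-- `L` is a T-line of `Σ∞^*`: a line meeting two of the transversal lines `g,g^q,g^{q^2}`
of the regular 2-spread. -/
def IsTLineBB (L : Submodule F3 (V63 F3)) : Prop :=
  ∃ (e e' : Fin 3) (a b a' b' : F3), e ≠ e' ∧ ¬(a = 0 ∧ b = 0) ∧ ¬(a' = 0 ∧ b' = 0) ∧
    L = Submodule.span F3 {gBlockVec e a b, gBlockVec e' a' b'}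

/-- The T-line `h^{q^e}` where `h = E (E^{c_π})^{q^2}`, `E` (resp. `E^{c_π}`) being the point
of the transversal `g` with coordinate pair `(a,b)` (resp. `(a',b')`). -/
def hLine (a b a' b' : F3) (e : Fin 3) : Submodule F3 (V63 F3) :=
  Submodule.span F3
    {gBlockVec e (a ^ Fintype.card Fq ^ (e : ℕ)) (b ^ Fintype.card Fq ^ (e : ℕ)),
     gBlockVec (e + 2) (a' ^ Fintype.card Fq ^ ((e : ℕ) + 2))
       (b' ^ Fintype.card Fq ^ ((e : ℕ) + 2))}

/-! ### 3-special normal rational curves -/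

/-- The pair `(a,b) ∈ F_{q^6}²` is proportional to an `F_{q^3}`-rational pair, i.e. the
corresponding point of the extended transversal line `g^☆` lies on `g`. -/
def rationalPair (a b : F6) : Prop :=
  ∃ (a0 b0 : F3) (c : F6), c ≠ 0 ∧ a = c * algebraMap F3 F6 a0 ∧ b = c * algebraMap F3 F6 b0

/-- The weight `w(P)` of a point `P` of `PG(5,q^6)` (given by a representing vector `w`):
1 if `P` is on an extended transversal line of the spread, 2 if not but `P` is on a line
meeting two of the extended transversal lines, 3 otherwise. -/
def weightV (w : V66 F6) : ℕ :=
  if ∃ (e : Fin 3) (a b : F6), w = gBlockVec e a b then 1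
  else if ∃ (e e' : Fin 3) (a b a' b' s t : F6), e ≠ e' ∧
      w = s • gBlockVec e a b + t • gBlockVec e' a' b' then 2
  else 3

/-- The orbit size `o(P)` of the point with representing vector `w` under the Frobenius
collineation `X ↦ X^q`. -/
def orbitSizeV (w : V66 F6) : ℕ :=
  Set.ncard {Q : Pt66 F6 | ∃ n : ℕ, pe Q ((tauBB (Fintype.card Fq))^[n] w)}

/-- `s(P) = 1` if `P` lies in an extended plane of the spread `S`, else `s(P) = 2`. -/
def sValV (w : V66 F6) : ℕ :=
  if ∃ x y : F3, ¬(x = 0 ∧ y = 0) ∧ w ∈ extSpreadVecs6 Fq F3 F6 x y then 1 else 2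

/-- The point of `PG(5,q^6)` with representing vector `w` is `S`-happy:
`w(P) ⬝ o(P) = 3 s(P)`. -/
def HappyV (w : V66 F6) : Prop :=
  weightV F6 w * orbitSizeV Fq F6 w = 3 * sValV Fq F3 F6 w

/-- The polynomial whose homogeneous roots give the points at infinity of the normal
rational curve parametrised by `v` (the last coordinates of the frame). -/
def infPoly {k : ℕ} (v : Fin (k + 1) → V6 Fq F3) : Polynomial Fq :=
  ∑ i : Fin (k + 1), Polynomial.C (v i).2 * Polynomial.X ^ (i : ℕ)

/-- The parametrised normal rational curve `v` is 3-special with respect to the regular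
2-spread `S`: it is not contained in `Σ∞`, all its points at infinity (with multiplicity,
including the point at the infinite parameter value) are defined over `F_{q^6}` and are
`S`-happy, and their weights sum to 6. -/
def Is3SpecialData {k : ℕ} (v : Fin (k + 1) → V6 Fq F3) : Prop :=
  infPoly Fq F3 v ≠ 0 ∧
  ((infPoly Fq F3 v).map (algebraMap Fq F6)).roots.card =
    ((infPoly Fq F3 v).map (algebraMap Fq F6)).natDegree ∧
  (∀ θ ∈ ((infPoly Fq F3 v).map (algebraMap Fq F6)).roots,
    HappyV Fq F3 F6 (∑ i : Fin (k + 1), θ ^ (i : ℕ) • iota66 Fq F3 F6 (v i))) ∧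
  (((infPoly Fq F3 v).map (algebraMap Fq F6)).natDegree < k →
    HappyV Fq F3 F6 (iota66 Fq F3 F6 (v (Fin.last k)))) ∧
  (((infPoly Fq F3 v).map (algebraMap Fq F6)).roots.map fun θ =>
      weightV F6 (∑ i : Fin (k + 1), θ ^ (i : ℕ) • iota66 Fq F3 F6 (v i))).sum +
    (k - ((infPoly Fq F3 v).map (algebraMap Fq F6)).natDegree) *
      weightV F6 (iota66 Fq F3 F6 (v (Fin.last k))) = 6

/-- `N` is a 3-special `k`-dimensional normal rational curve of `PG(6,q)` with respect to
the regular 2-spread `S`. -/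
def Is3Special (k : ℕ) (N : Set (Pt6 Fq F3)) : Prop :=
  ∃ v : Fin (k + 1) → V6 Fq F3, LinearIndependent Fq v ∧ N = nrcPts6 Fq F3 v ∧
    Is3SpecialData Fq F3 F6 v

end BruckBose

/-!
The conic is `θ ↦ M (1, θ, θ²) = (f₀, f₁, f)(θ)`, `θ ∈ F_q ∪ {∞}`, for the row polynomials of `M`.
With `σ : x ↦ x^q` (so `σ³ = 1` on `F_{q³}`), the affine point `(f₀/f, f₁/f)(θ)` is represented in
`PG(6,q)` by its multiple by the norm `(f f^σ f^{σ²})(θ) ∈ F_q`. Dividing the three resulting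
polynomials by the (`σ`-invariant) gcd `h` of `f^σ f^{σ²}, f^{σ²} f, f f^σ` gives the curve
`θ ↦ (f₀ r, f₁ r, f r)(θ)`, `r = f^σ f^{σ²} / h`, with `f r` defined over `F_q`; it also sends the
roots of `f` and `θ = ∞` into the right spread planes.

Since `deg h + deg r = 2 deg f ≤ 4` and `deg h ≠ 1` (a `σ`-invariant root `γ` of `h` is a root of
`f`, so `(X - γ)²` divides all three products), the degree `k = deg r + 2` lies in `{2, 3, 4, 6}`.
The coefficient vectors are `F_q`-independent: a dependence gives a functional with coefficients
in `F_q` killing `f₀ r, f₁ r, f r` and their conjugates, hence every `l r^{σ^e}` with `deg l ≤ 2`;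
as `r, r^σ, r^{σ²}` are jointly coprime, these span all polynomials of degree at most `k`.
-/

open Polynomial

namespace Polynomial

variable {K : Type*} [Field K]

theorem exists_eq_mul_add_mul_degree_lt {A B : K[X]} (hA : A ≠ 0) (h : IsCoprime A B)
    (p : K[X]) :
    ∃ s t : K[X], p = s * A + t * B ∧ t.degree < A.degree ∧
      s.natDegree + A.natDegree ≤ max p.natDegree (A.natDegree + B.natDegree) := by
  obtain ⟨a, b, hab⟩ := h
  set t := b * p % A
  set s := a * p + b * p / A * B
  have hp : p = s * A + t * B := by
    linear_combination (-p) * hab - B * EuclideanDomain.div_add_mod (b * p) A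
  have ht : t.degree < A.degree := degree_mod_lt _ hA
  refine ⟨s, t, hp, ht, ?_⟩
  rcases eq_or_ne s 0 with hs | hs
  · simp [hs]
  have htB : (t * B).natDegree ≤ A.natDegree + B.natDegree :=
    natDegree_mul_le.trans (by gcongr; exact natDegree_le_natDegree ht.le)
  calc s.natDegree + A.natDegree = (p - t * B).natDegree := by
        rw [← natDegree_mul hs hA]; congr 1; rw [hp]; ring
    _ ≤ max p.natDegree (t * B).natDegree := natDegree_sub_le _ _
    _ ≤ _ := max_le_max le_rfl htB

theorem exists_eq_mul_add_mul_natDegree_le_two {a0 a1 s : K[X]} {n : ℕ} (ha0 : a0 ≠ 0)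
    (hcop : IsCoprime a0 a1) (h0 : a0.natDegree = n) (h1 : a1.natDegree ≤ n) (hn : n ≤ 2)
    (hs : s.natDegree ≤ n + 2) :
    ∃ s0 s1 : K[X], s0.natDegree ≤ 2 ∧ s1.natDegree ≤ 2 ∧ s = s0 * a0 + s1 * a1 := by
  obtain ⟨s0, s1, hs01, hs1, hs0⟩ := exists_eq_mul_add_mul_degree_lt ha0 hcop s
  have := natDegree_le_natDegree hs1.le
  refine ⟨s0, s1, ?_, by omega, hs01⟩
  have := max_le hs (show n + a1.natDegree ≤ n + 2 by omega)
  omega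

theorem exists_combination_of_natDegree_le_two {Q0 Q1 Q2 p : K[X]} {m : ℕ} (hQ0 : Q0 ≠ 0)
    (h0 : Q0.natDegree = m) (h1 : Q1.natDegree ≤ m) (h2 : Q2.natDegree ≤ m) (hm : m ≤ 2)
    (hcop : IsCoprime (gcd Q0 Q1) Q2) (hp : p.natDegree ≤ m + 2) :
    ∃ l0 l1 l2 : K[X], l0.natDegree ≤ 2 ∧ l1.natDegree ≤ 2 ∧ l2.natDegree ≤ 2 ∧
      p = l0 * Q0 + l1 * Q1 + l2 * Q2 := by
  have hd : gcd Q0 Q1 ≠ 0 := fun h => hQ0 ((gcd_eq_zero_iff _ _).1 h).1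
  have hcop01 := isCoprime_div_gcd_div_gcd_of_gcd_ne_zero hd
  have hQ0d := (EuclideanDomain.mul_div_cancel' hd (gcd_dvd_left Q0 Q1)).symm
  have hQ1d := (EuclideanDomain.mul_div_cancel' hd (gcd_dvd_right Q0 Q1)).symm
  set d := gcd Q0 Q1
  set a0 := Q0 / d
  set a1 := Q1 / d
  clear_value d a0 a1
  have ha0 : a0 ≠ 0 := right_ne_zero_of_mul (hQ0d ▸ hQ0)
  have hdeg0 : d.natDegree + a0.natDegree = m := by rw [← natDegree_mul hd ha0, ← hQ0d, h0]
  have hdeg1 : d.natDegree + a1.natDegree ≤ m := by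
    rcases eq_or_ne a1 0 with h | h
    · rw [h, natDegree_zero]; omega
    · rw [← natDegree_mul hd h, ← hQ1d]; exact h1
  obtain ⟨s, t, hst, ht, hs⟩ := exists_eq_mul_add_mul_degree_lt hd hcop p
  have := natDegree_le_natDegree ht.le
  have := max_le hp (show d.natDegree + Q2.natDegree ≤ m + 2 by omega)
  obtain ⟨s0, s1, hs0, hs1, hs01⟩ := exists_eq_mul_add_mul_natDegree_le_two (s := s) ha0
    hcop01 rfl (by omega) (by omega) (by omega)
  refine ⟨s0, s1, t, hs0, hs1, by omega, ?_⟩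
  rw [hst, hs01]
  linear_combination (-s0) * hQ0d - s1 * hQ1d

theorem exists_combination_of_pairwise_isCoprime {A0 A1 A2 p : K[X]} (h0 : A0.natDegree = 2)
    (h1 : A1.natDegree = 2) (h2 : A2.natDegree = 2) (h01 : IsCoprime A0 A1)
    (h02 : IsCoprime A0 A2) (h12 : IsCoprime A1 A2) (hp : p.natDegree ≤ 6) :
    ∃ l0 l1 l2 : K[X], l0.natDegree ≤ 2 ∧ l1.natDegree ≤ 2 ∧ l2.natDegree ≤ 2 ∧
      p = l0 * (A1 * A2) + l1 * (A2 * A0) + l2 * (A0 * A1) := by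
  have hA0 : A0 ≠ 0 := by rintro rfl; simp at h0
  have hA1 : A1 ≠ 0 := by rintro rfl; simp at h1
  have hA2 : A2 ≠ 0 := by rintro rfl; simp at h2
  have h12deg : (A1 * A2).natDegree = 4 := by rw [natDegree_mul hA1 hA2]; omega
  obtain ⟨s, t, hst, ht, hs⟩ := exists_eq_mul_add_mul_degree_lt hA0 (h01.mul_right h02) p
  have := natDegree_le_natDegree ht.le
  obtain ⟨s0, s1, hs0, hs1, hs01⟩ := exists_eq_mul_add_mul_natDegree_le_two (s := s) hA1 h12 h1
    h2.le le_rfl (by omega)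
  refine ⟨t, s1, s0, by omega, hs1, hs0, ?_⟩
  rw [hst, hs01]
  ring

section CubicConjugation

variable {K : Type*} [Field K] (σ : K →+* K) (f : K[X])

def conjGcd : K[X] :=
  gcd (gcd (f.map σ * (f.map σ).map σ) ((f.map σ).map σ * f)) (f * f.map σ)

def conjCofactor : K[X] :=
  f.map σ * (f.map σ).map σ / conjGcd σ f

variable {σ f}

theorem map_map_map_of_cube (hσ : ∀ x, σ (σ (σ x)) = x) (p : K[X]) :
    ((p.map σ).map σ).map σ = p := by
  ext n
  simp [coeff_map, hσ]

theorem eval_map_of_apply_eq_self {x : K} (hx : σ x = x) (p : K[X]) :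
    (p.map σ).eval x = σ (p.eval x) := by
  conv_lhs => rw [← hx]
  exact eval_map_apply σ x

theorem conjGcd_ne_zero (hf : f ≠ 0) : conjGcd σ f ≠ 0 :=
  gcd_ne_zero_of_right (mul_ne_zero hf (Polynomial.map_ne_zero hf))

theorem conjGcd_monic (hf : f ≠ 0) : (conjGcd σ f).Monic := by
  have : normalize (conjGcd σ f) = conjGcd σ f := normalize_gcd _ _
  exact this ▸ monic_normalize (conjGcd_ne_zero hf)

theorem conjGcd_dvd_left : conjGcd σ f ∣ f.map σ * (f.map σ).map σ :=
  (gcd_dvd_left _ _).trans (gcd_dvd_left _ _)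

theorem conjGcd_dvd_middle : conjGcd σ f ∣ (f.map σ).map σ * f :=
  (gcd_dvd_left _ _).trans (gcd_dvd_right _ _)

theorem conjGcd_dvd_right : conjGcd σ f ∣ f * f.map σ :=
  gcd_dvd_right _ _

theorem dvd_conjGcd {d : K[X]} (h0 : d ∣ f.map σ * (f.map σ).map σ)
    (h1 : d ∣ (f.map σ).map σ * f) (h2 : d ∣ f * f.map σ) : d ∣ conjGcd σ f :=
  dvd_gcd (dvd_gcd h0 h1) h2

theorem map_conjGcd (hσ : ∀ x, σ (σ (σ x)) = x) (hf : f ≠ 0) :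
    (conjGcd σ f).map σ = conjGcd σ f := by
  refine (eq_of_monic_of_dvd_of_natDegree_le ((conjGcd_monic hf).map σ) (conjGcd_monic hf)
    (dvd_conjGcd ?_ ?_ ?_) (natDegree_map σ).ge).symm
  · simpa using map_dvd σ (conjGcd_dvd_right (σ := σ) (f := f))
  · simpa [map_map_map_of_cube hσ] using map_dvd σ (conjGcd_dvd_left (σ := σ) (f := f))
  · simpa [map_map_map_of_cube hσ] using map_dvd σ (conjGcd_dvd_middle (σ := σ) (f := f))

theorem conjGcd_mul_conjCofactor (hf : f ≠ 0) :
    conjGcd σ f * conjCofactor σ f = f.map σ * (f.map σ).map σ :=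
  EuclideanDomain.mul_div_cancel' (conjGcd_ne_zero hf) conjGcd_dvd_left

theorem conjCofactor_ne_zero (hf : f ≠ 0) : conjCofactor σ f ≠ 0 := by
  intro h0
  have hmap : f.map σ ≠ 0 := Polynomial.map_ne_zero hf
  have := conjGcd_mul_conjCofactor (σ := σ) hf
  rw [h0, mul_zero] at this
  exact mul_ne_zero hmap (Polynomial.map_ne_zero hmap) this.symm

theorem conjGcd_mul_map_conjCofactor (hσ : ∀ x, σ (σ (σ x)) = x) (hf : f ≠ 0) :
    conjGcd σ f * (conjCofactor σ f).map σ = (f.map σ).map σ * f := by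
  simpa [map_conjGcd hσ hf, map_map_map_of_cube hσ] using
    congrArg (map σ) (conjGcd_mul_conjCofactor (σ := σ) hf)

theorem conjGcd_mul_map_map_conjCofactor (hσ : ∀ x, σ (σ (σ x)) = x) (hf : f ≠ 0) :
    conjGcd σ f * ((conjCofactor σ f).map σ).map σ = f * f.map σ := by
  simpa [map_conjGcd hσ hf, map_map_map_of_cube hσ] using
    congrArg (map σ) (conjGcd_mul_map_conjCofactor hσ hf)

/-- `f * conjCofactor σ f` is the `σ`-invariant norm `f * f^σ * f^{σ²}` divided by the
`σ`-invariant `conjGcd σ f`. -/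
theorem map_mul_conjCofactor (hσ : ∀ x, σ (σ (σ x)) = x) (hf : f ≠ 0) :
    (f * conjCofactor σ f).map σ = f * conjCofactor σ f := by
  apply mul_left_cancel₀ (conjGcd_ne_zero (σ := σ) hf)
  calc conjGcd σ f * (f * conjCofactor σ f).map σ
      = f.map σ * (conjGcd σ f * (conjCofactor σ f).map σ) := by rw [Polynomial.map_mul]; ring
    _ = f * (conjGcd σ f * conjCofactor σ f) := by
      rw [conjGcd_mul_map_conjCofactor hσ hf, conjGcd_mul_conjCofactor hf]; ring
    _ = _ := by ring

theorem isCoprime_gcd_conjCofactor (hσ : ∀ x, σ (σ (σ x)) = x) (hf : f ≠ 0) :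
    IsCoprime (gcd (conjCofactor σ f) ((conjCofactor σ f).map σ))
      (((conjCofactor σ f).map σ).map σ) := by
  rw [← gcd_isUnit_iff]
  have hnorm : normalize (conjGcd σ f) = conjGcd σ f := normalize_gcd _ _
  have key : conjGcd σ f * gcd (gcd (conjCofactor σ f) ((conjCofactor σ f).map σ))
      (((conjCofactor σ f).map σ).map σ) = conjGcd σ f * 1 :=
    calc _ = gcd (gcd (conjGcd σ f * conjCofactor σ f) (conjGcd σ f * (conjCofactor σ f).map σ))
          (conjGcd σ f * ((conjCofactor σ f).map σ).map σ) := by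
          rw [gcd_mul_left, hnorm, gcd_mul_left, hnorm]
      _ = gcd (gcd (f.map σ * (f.map σ).map σ) ((f.map σ).map σ * f)) (f * f.map σ) := by
          rw [conjGcd_mul_conjCofactor hf, conjGcd_mul_map_conjCofactor hσ hf,
            conjGcd_mul_map_map_conjCofactor hσ hf]
      _ = conjGcd σ f * 1 := (mul_one _).symm
  rw [mul_left_cancel₀ (conjGcd_ne_zero hf) key]
  exact isUnit_one

theorem sq_X_sub_C_dvd_conjGcd {γ : K} (hγ : σ γ = γ) (hroot : (conjGcd σ f).IsRoot γ) :
    (X - C γ) ^ 2 ∣ conjGcd σ f := by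
  have hconj := eval_map_of_apply_eq_self hγ
  have hP : (f.map σ * (f.map σ).map σ).IsRoot γ := hroot.dvd conjGcd_dvd_left
  have hfγ : f.IsRoot γ := by
    simpa [IsRoot, hconj] using hP
  have h0 : X - C γ ∣ f := dvd_iff_isRoot.2 hfγ
  have h1 : X - C γ ∣ f.map σ := dvd_iff_isRoot.2 (by simp [IsRoot, hconj, hfγ.eq_zero])
  have h2 : X - C γ ∣ (f.map σ).map σ := dvd_iff_isRoot.2 (by simp [IsRoot, hconj, hfγ.eq_zero])
  rw [sq]
  exact dvd_conjGcd (mul_dvd_mul h1 h2) (mul_dvd_mul h2 h0) (mul_dvd_mul h0 h1)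

theorem natDegree_conjGcd_ne_one (hσ : ∀ x, σ (σ (σ x)) = x) (hf : f ≠ 0) :
    (conjGcd σ f).natDegree ≠ 1 := by
  intro h1
  have heq := (conjGcd_monic (σ := σ) hf).eq_X_add_C h1
  have hfix : σ (-(conjGcd σ f).coeff 0) = -(conjGcd σ f).coeff 0 := by
    rw [map_neg, ← coeff_map, map_conjGcd hσ hf]
  have hroot : (conjGcd σ f).IsRoot (-(conjGcd σ f).coeff 0) := by
    rw [IsRoot, heq]; simp
  have := natDegree_le_of_dvd (sq_X_sub_C_dvd_conjGcd hfix hroot) (conjGcd_ne_zero hf)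
  rw [natDegree_pow, natDegree_X_sub_C] at this
  omega

theorem natDegree_conjGcd_add_natDegree_conjCofactor (hf : f ≠ 0) :
    (conjGcd σ f).natDegree + (conjCofactor σ f).natDegree = 2 * f.natDegree := by
  have hmap : f.map σ ≠ 0 := Polynomial.map_ne_zero hf
  rw [← natDegree_mul (conjGcd_ne_zero hf) (conjCofactor_ne_zero hf), conjGcd_mul_conjCofactor hf,
    natDegree_mul hmap (Polynomial.map_ne_zero hmap)]
  simp only [natDegree_map]
  ring

theorem isCoprime_map_of_natDegree_conjGcd_eq_zero (hf : f ≠ 0)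
    (h0 : (conjGcd σ f).natDegree = 0) : IsCoprime f (f.map σ) := by
  rw [← gcd_isUnit_iff]
  refine isUnit_of_dvd_unit (dvd_conjGcd ?_ ?_ ?_)
    (((conjGcd_monic hf).natDegree_eq_zero.1 h0) ▸ isUnit_one)
  · exact (gcd_dvd_right _ _).mul_right _
  · exact (gcd_dvd_left _ _).mul_left _
  · exact (gcd_dvd_left _ _).mul_right _

theorem natDegree_conjCofactor_add_two_mem (hσ : ∀ x, σ (σ (σ x)) = x) (hf : f ≠ 0)
    (hf2 : f.natDegree ≤ 2) : (conjCofactor σ f).natDegree + 2 ∈ ({2, 3, 4, 6} : Set ℕ) := by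
  have := natDegree_conjGcd_add_natDegree_conjCofactor (σ := σ) hf
  have := natDegree_conjGcd_ne_one hσ hf
  simp only [Set.mem_insert_iff, Set.mem_singleton_iff]
  omega

theorem exists_combination_conjCofactor (hσ : ∀ x, σ (σ (σ x)) = x) (hf : f ≠ 0)
    (hf2 : f.natDegree ≤ 2) {p : K[X]} (hp : p.natDegree ≤ (conjCofactor σ f).natDegree + 2) :
    ∃ l0 l1 l2 : K[X], l0.natDegree ≤ 2 ∧ l1.natDegree ≤ 2 ∧ l2.natDegree ≤ 2 ∧
      p = l0 * conjCofactor σ f + l1 * (conjCofactor σ f).map σ +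
        l2 * ((conjCofactor σ f).map σ).map σ := by
  have hsum := natDegree_conjGcd_add_natDegree_conjCofactor (σ := σ) hf
  by_cases hm : (conjCofactor σ f).natDegree ≤ 2
  · exact exists_combination_of_natDegree_le_two (conjCofactor_ne_zero hf) rfl
      (natDegree_map σ).le (by rw [natDegree_map, natDegree_map]) hm
      (isCoprime_gcd_conjCofactor hσ hf) hp
  -- Otherwise `deg r = 4` and `conjGcd σ f = 1`, so `r, r^σ, r^{σ²}` are the products of two of
  -- the pairwise coprime conjugates of `f`.
  have := natDegree_conjGcd_ne_one hσ hf
  have h0 : (conjGcd σ f).natDegree = 0 := by omega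
  have hone : conjGcd σ f = 1 := (conjGcd_monic hf).natDegree_eq_zero.1 h0
  have c01 := isCoprime_map_of_natDegree_conjGcd_eq_zero hf h0
  have c12 := (isCoprime_map σ).2 c01
  have c20 := (isCoprime_map σ).2 c12
  rw [map_map_map_of_cube hσ] at c20
  have hr0 := conjGcd_mul_conjCofactor (σ := σ) hf
  have hr1 := conjGcd_mul_map_conjCofactor hσ hf
  have hr2 := conjGcd_mul_map_map_conjCofactor hσ hf
  rw [hone, one_mul] at hr0 hr1 hr2
  rw [hr2, hr1, hr0]
  exact exists_combination_of_pairwise_isCoprime (by omega) (by rw [natDegree_map]; omega)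
    (by rw [natDegree_map, natDegree_map]; omega) c01 c20.symm c12 (by omega)

theorem eval_conjCofactor_ne_zero (hf : f ≠ 0) {x : K} (hx : σ x = x) (hfx : f.eval x ≠ 0) :
    (conjCofactor σ f).eval x ≠ 0 := by
  have hconj := eval_map_of_apply_eq_self hx
  intro h0
  have := congrArg (eval x) (conjGcd_mul_conjCofactor (σ := σ) hf)
  simp [h0, hconj, hfx] at this

end CubicConjugation

end Polynomial

namespace FiniteField

variable {K L : Type*} [Field K] [Fintype K] [Field L] [Algebra K L]

theorem exists_algebraMap_eq_of_pow_card_eq_self {x : L} (hx : x ^ Fintype.card K = x) :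
    ∃ a : K, algebraMap K L a = x := by
  have hroots := roots_X_pow_card_sub_X K
  have hmap := Polynomial.roots_map_of_injective_of_card_eq_natDegree
    (algebraMap K L).injective (p := Polynomial.X ^ Fintype.card K - Polynomial.X)
    (by rw [hroots, X_pow_card_sub_X_natDegree_eq K Fintype.one_lt_card]; rfl)
  have hmem : x ∈ (Polynomial.map (algebraMap K L)
      (Polynomial.X ^ Fintype.card K - Polynomial.X)).roots := by
    rw [Polynomial.mem_roots (Polynomial.map_ne_zero (X_pow_card_sub_X_ne_zero K
      Fintype.one_lt_card))]
    simp [hx]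
  rw [← hmap, hroots] at hmem
  simpa using hmem

theorem exists_map_eq_of_map_frobeniusAlgHom {p : Polynomial L}
    (hp : p.map (frobeniusAlgHom K L : L →+* L) = p) :
    ∃ p₀ : Polynomial K, p₀.map (algebraMap K L) = p := by
  refine (Polynomial.mem_lifts p).1 ((Polynomial.lifts_iff_coeff_lifts p).2 fun n => ?_)
  refine exists_algebraMap_eq_of_pow_card_eq_self ?_
  simpa using congrArg (Polynomial.coeff · n) hp

theorem frobeniusAlgHom_cube [Fintype L] (h3 : Fintype.card L = Fintype.card K ^ 3) (x : L) :
    frobeniusAlgHom K L (frobeniusAlgHom K L (frobeniusAlgHom K L x)) = x := by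
  simp only [frobeniusAlgHom_apply, ← pow_mul]
  rw [show Fintype.card K * Fintype.card K * Fintype.card K = Fintype.card L by rw [h3]; ring,
    pow_card]

end FiniteField

theorem pe_mk {K V : Type*} [DivisionRing K] [AddCommGroup V] [Module K V] {u : V}
    (hu : u ≠ 0) : pe (Projectivization.mk K u hu) u := by
  obtain ⟨a, ha⟩ := (Projectivization.mk_eq_mk_iff K _ _
    (Projectivization.rep_nonzero _) hu).mp (Projectivization.mk_rep (Projectivization.mk K u hu))
  exact ⟨a, a.ne_zero, by rw [← ha, Units.smul_def]⟩

section BruckBoseCurves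

variable (Fq F3 : Type) [Field Fq] [Field F3] [Algebra Fq F3]

/-- The vector `w` of `PG(6,q)` lies over the vector `u` of `PG(2,q³)` with factor `ρ`: it is
`ρ • u` read in the Bruck-Bose coordinates `(x, y, z) ↦ ((x, y), z)`. -/
def LiesOver (ρ : F3) (w : V6 Fq F3) (u : Fin 3 → F3) : Prop :=
  w.1 = ![ρ * u 0, ρ * u 1] ∧ algebraMap Fq F3 w.2 = ρ * u 2

variable {Fq F3}

theorem mem_bbExact_of_liesOver {C : Set (Pt2 F3)} {P : Pt2 F3} {Q : Pt6 Fq F3}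
    {u : Fin 3 → F3} {w : V6 Fq F3} {ρ : F3} (hP : P ∈ C) (hPu : pe P u) (hQw : pe Q w)
    (hw : LiesOver Fq F3 ρ w u) : Q ∈ bbExact Fq F3 C := by
  obtain ⟨a, ha, hPa⟩ := hPu
  obtain ⟨c, hc, hQc⟩ := hQw
  obtain ⟨hw1, hw2⟩ := hw
  refine ⟨P, hP, ?_⟩
  by_cases hu2 : u 2 = 0
  · have hw20 : w.2 = 0 := by simpa [hu2] using hw2
    refine Or.inr ⟨u 0, u 1, ⟨a, ha, ?_⟩, algebraMap Fq F3 c * ρ, ?_⟩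
    · rw [hPa]; congr 1; ext i; fin_cases i <;> simp [hu2]
    · rw [hQc, Prod.smul_def, hw1, hw20]
      refine Prod.ext ?_ (by simp)
      ext i; fin_cases i <;> simp [Algebra.smul_def] <;> ring
  · have hρ : ρ ≠ 0 := by
      rintro rfl
      apply Q.rep_nonzero
      rw [hQc, show w = 0 by ext i <;> (try fin_cases i) <;> simp_all, smul_zero]
    have hw20 : w.2 ≠ 0 := by
      rintro h0
      rw [h0, map_zero] at hw2
      exact mul_ne_zero hρ hu2 hw2.symm
    refine Or.inl ⟨u 0 / u 2, u 1 / u 2, ⟨a * u 2, mul_ne_zero ha hu2, ?_⟩,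
      ⟨c * w.2, mul_ne_zero hc hw20, ?_⟩⟩
    · rw [hPa, ← smul_smul]; congr 1; ext i; fin_cases i <;> simp <;> field_simp
    · rw [hQc, ← smul_smul]; congr 1
      refine Prod.ext ?_ (by simp)
      ext i; fin_cases i <;> simp [hw1, Algebra.smul_def, hw2] <;> field_simp

theorem pe_of_liesOver {P : Pt2 F3} {Q : Pt6 Fq F3} {u : Fin 3 → F3} {w : V6 Fq F3} {ρ x y : F3}
    (hPu : pe P u) (hPxy : pe P ![x, y, 1]) (hQxy : pe Q (![x, y], (1 : Fq)))
    (hw : LiesOver Fq F3 ρ w u) (hρ : u 2 ≠ 0 → ρ ≠ 0) : pe Q w := by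
  obtain ⟨a, ha, hPa⟩ := hPu
  obtain ⟨b, hb, hPb⟩ := hPxy
  obtain ⟨d, hd, hQd⟩ := hQxy
  obtain ⟨hw1, hw2⟩ := hw
  have hu : u = (b / a) • ![x, y, 1] := by
    rw [div_eq_inv_mul, ← smul_smul, ← hPb, hPa, smul_smul, inv_mul_cancel₀ ha, one_smul]
  have hu2 : u 2 ≠ 0 := by simp [hu, ha, hb]
  have hw20 : w.2 ≠ 0 := by
    rintro h0
    rw [h0, map_zero] at hw2
    exact mul_ne_zero (hρ hu2) hu2 hw2.symm
  refine ⟨d / w.2, div_ne_zero hd hw20, ?_⟩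
  rw [hQd, div_eq_mul_inv, mul_smul]
  congr 1
  rw [eq_inv_smul_iff₀ hw20]
  refine (Prod.ext ?_ (by simp)).symm
  ext i; fin_cases i <;> simp [hw1, hu, Algebra.smul_def, hw2] <;> ring

theorem exists_affine_of_mem_bbExact {C : Set (Pt2 F3)} {Q : Pt6 Fq F3}
    (hQ : Q ∈ bbExact Fq F3 C) (hQinf : Q ∉ inf6 Fq F3) :
    ∃ P ∈ C, ∃ x y : F3, pe P ![x, y, 1] ∧ pe Q (![x, y], (1 : Fq)) := by
  obtain ⟨P, hP, ⟨x, y, hPxy, hQxy⟩ | ⟨x, y, -, l, hl⟩⟩ := hQ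
  · exact ⟨P, hP, x, y, hPxy, hQxy⟩
  · exact absurd (show Q.rep.2 = 0 by rw [hl]) hQinf

end BruckBoseCurves

section CoefficientFrames

variable (Fq F3 : Type) [Field Fq] [Field F3] [Algebra Fq F3]

def coeffFrame (k : ℕ) (px py : F3[X]) (pz : Fq[X]) : Fin (k + 1) → V6 Fq F3 :=
  fun i => (![px.coeff i, py.coeff i], pz.coeff i)

def galoisSpan (px py : F3[X]) (pz : Fq[X]) : Submodule F3 F3[X] :=
  Submodule.span F3 (insert (pz.map (algebraMap Fq F3))
    {p | ∃ φ : F3 →ₐ[Fq] F3, p = px.map (φ : F3 →+* F3) ∨ p = py.map (φ : F3 →+* F3)})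

variable {Fq F3}

theorem sum_pow_smul_coeffFrame {k : ℕ} {px py : F3[X]} {pz : Fq[X]} (hx : px.natDegree ≤ k)
    (hy : py.natDegree ≤ k) (hz : pz.natDegree ≤ k) (θ : Fq) :
    ∑ i : Fin (k + 1), θ ^ (i : ℕ) • coeffFrame Fq F3 k px py pz i =
      (![px.eval (algebraMap Fq F3 θ), py.eval (algebraMap Fq F3 θ)], pz.eval θ) := by
  have key : ∀ {R : Type} [CommSemiring R] [Algebra Fq R] (p : R[X]), p.natDegree ≤ k →
      ∑ i : Fin (k + 1), θ ^ (i : ℕ) • p.coeff i = p.eval (algebraMap Fq R θ) := by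
    intro R _ _ p hp
    rw [eval_eq_sum_range' (Nat.lt_succ_of_le hp),
      ← Fin.sum_univ_eq_sum_range (fun i => p.coeff i * algebraMap Fq R θ ^ i)]
    simp [Algebra.smul_def, mul_comm]
  refine Prod.ext ?_ ?_
  · ext j
    fin_cases j <;> simp [coeffFrame, Prod.fst_sum, Finset.sum_apply, ← key _ hx, ← key _ hy]
  · simpa [coeffFrame, Prod.snd_sum] using key pz hz

/-- A vanishing combination `∑ cᵢ • vᵢ` gives the functional `p ↦ ∑ cᵢ pᵢ`, which kills `px`,
`py`, `pz` and, its coefficients being in `F_q`, all their Galois conjugates. -/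
theorem linearIndependent_coeffFrame {k : ℕ} {px py : F3[X]} {pz : Fq[X]}
    (hX : ∀ i ≤ k, (X : F3[X]) ^ i ∈ galoisSpan Fq F3 px py pz) :
    LinearIndependent Fq (coeffFrame Fq F3 k px py pz) := by
  rw [Fintype.linearIndependent_iff]
  intro c hc
  let T : F3[X] →ₗ[F3] F3 := ∑ i : Fin (k + 1), algebraMap Fq F3 (c i) • lcoeff F3 (i : ℕ)
  have hT : ∀ p, T p = ∑ i : Fin (k + 1), algebraMap Fq F3 (c i) * p.coeff i := by
    intro p; simp [T, Algebra.smul_def]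
  have hTmap : ∀ (φ : F3 →ₐ[Fq] F3) p, T (p.map (φ : F3 →+* F3)) = φ (T p) := by
    intro φ p; simp [hT, coeff_map, map_sum]
  have hx : T px = 0 := by
    simpa [hT, coeffFrame, Prod.fst_sum, Finset.sum_apply, Algebra.smul_def] using
      congrArg (fun w : V6 Fq F3 => w.1 0) hc
  have hy : T py = 0 := by
    simpa [hT, coeffFrame, Prod.fst_sum, Finset.sum_apply, Algebra.smul_def] using
      congrArg (fun w : V6 Fq F3 => w.1 1) hc
  have hz : T (pz.map (algebraMap Fq F3)) = 0 := by
    have := congrArg (algebraMap Fq F3) (congrArg (fun w : V6 Fq F3 => w.2) hc)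
    simpa [hT, coeffFrame, Prod.snd_sum, map_sum] using this
  have hW : galoisSpan Fq F3 px py pz ≤ LinearMap.ker T := by
    rw [galoisSpan, Submodule.span_le]
    rintro p (rfl | ⟨φ, rfl | rfl⟩)
    · exact hz
    · simp [LinearMap.mem_ker, hTmap, hx]
    · simp [LinearMap.mem_ker, hTmap, hy]
  intro i
  have := hW (hX i (Nat.lt_succ_iff.1 i.2))
  simpa [hT, coeff_X_pow, Fin.val_eq_val] using this

end CoefficientFrames

section RowPolynomials

variable {K : Type*} [Field K] (M : Matrix (Fin 3) (Fin 3) K)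

def rowPoly (j : Fin 3) : K[X] := ∑ i : Fin 3, C (M j i) * X ^ (i : ℕ)

theorem eval_rowPoly (j : Fin 3) (x : K) : (rowPoly M j).eval x = M.mulVec ![1, x, x ^ 2] j := by
  simp [rowPoly, Matrix.mulVec, dotProduct, Fin.sum_univ_three]

theorem natDegree_rowPoly_le (j : Fin 3) : (rowPoly M j).natDegree ≤ 2 := by
  rw [rowPoly, Fin.sum_univ_three]
  compute_degree

theorem coeff_rowPoly (j i : Fin 3) : (rowPoly M j).coeff i = M j i := by
  fin_cases i <;> simp [rowPoly, Fin.sum_univ_three, coeff_X]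

theorem rowPoly_ne_zero {M : Matrix (Fin 3) (Fin 3) K} (hM : IsUnit M.det) (j : Fin 3) :
    rowPoly M j ≠ 0 := fun h =>
  hM.ne_zero <| Matrix.det_eq_zero_of_row_eq_zero j fun i => by
    rw [← coeff_rowPoly M j i, h, coeff_zero]

theorem map_rowPoly {L : Type*} [Field L] (φ : K →+* L) (j : Fin 3) :
    (rowPoly M j).map φ = rowPoly (M.map φ) j := by
  simp [rowPoly, Polynomial.map_sum]

theorem coeff_rowPoly_mul_natDegree_add_two (j : Fin 3) (r : K[X]) :
    (rowPoly M j * r).coeff (r.natDegree + 2) = M j 2 * r.leadingCoeff := by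
  rw [add_comm, coeff_mul_add_eq_of_natDegree_le (natDegree_rowPoly_le M j) le_rfl]
  exact congrArg (· * _) (coeff_rowPoly M j 2)

/-- The rows of an invertible `M` span the polynomials of degree at most 2. -/
theorem mul_mem_of_rowPoly_mul_mem {W : Submodule K K[X]} {M : Matrix (Fin 3) (Fin 3) K}
    (hM : IsUnit M.det) {r : K[X]} (h : ∀ j, rowPoly M j * r ∈ W) {l : K[X]}
    (hl : l.natDegree ≤ 2) : l * r ∈ W := by
  set c := Matrix.vecMul (fun i : Fin 3 => l.coeff i) M⁻¹
  have hc : Matrix.vecMul c M = fun i : Fin 3 => l.coeff i := by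
    rw [Matrix.vecMul_vecMul, Matrix.nonsing_inv_mul M hM, Matrix.vecMul_one]
  have hl' : l = ∑ j, C (c j) * rowPoly M j := by
    calc l = ∑ i : Fin 3, C (l.coeff i) * X ^ (i : ℕ) := by
          conv_lhs => rw [as_sum_range' l 3 (by omega)]
          simp [Fin.sum_univ_three, Finset.sum_range_succ, C_mul_X_pow_eq_monomial]
      _ = ∑ i : Fin 3, C (Matrix.vecMul c M i) * X ^ (i : ℕ) := by rw [hc]
      _ = ∑ j, C (c j) * rowPoly M j := by
          simp only [Matrix.vecMul, dotProduct, rowPoly, Fin.sum_univ_three, map_add, map_mul]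
          ring
  rw [hl', Finset.sum_mul]
  refine W.sum_mem fun j _ => ?_
  rw [mul_assoc, ← smul_eq_C_mul]
  exact W.smul_mem _ (h j)

end RowPolynomials

section ConicCurve

variable {Fq F3 : Type} [Field Fq] [Field F3] [Algebra Fq F3] {M : Matrix (Fin 3) (Fin 3) F3}

theorem mulVec_conicParam (θ : Fq) (j : Fin 3) :
    M.mulVec (fun i => algebraMap Fq F3 (![1, θ, θ ^ 2] i)) j =
      (rowPoly M j).eval (algebraMap Fq F3 θ) := by
  rw [eval_rowPoly]
  congr 2
  ext i
  fin_cases i <;> simp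

theorem exists_mem_conicOf_pe (hM : IsUnit M.det) {u : Fin 3 → F3}
    (hu : u ∈ conicVecs Fq F3 M) : ∃ P ∈ conicOf Fq F3 M, pe P u := by
  have hinj := Matrix.mulVec_injective_iff_isUnit.2 ((Matrix.isUnit_iff_isUnit_det M).2 hM)
  have hu0 : u ≠ 0 := by
    rcases hu with ⟨θ, rfl⟩ | rfl
    · exact fun h => by simpa using congrFun (hinj (h.trans M.mulVec_zero.symm)) 0
    · exact fun h => by simpa using congrFun (hinj (h.trans M.mulVec_zero.symm)) 2
  exact ⟨_, ⟨u, hu, pe_mk hu0⟩, pe_mk hu0⟩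

variable (Fq) [Fintype Fq]

def conicCofactor (M : Matrix (Fin 3) (Fin 3) F3) : F3[X] :=
  conjCofactor (FiniteField.frobeniusAlgHom Fq F3 : F3 →+* F3) (rowPoly M 2)

variable {Fq}

theorem exists_map_eq_rowPoly_two_mul_conicCofactor [Fintype F3]
    (h3 : Fintype.card F3 = Fintype.card Fq ^ 3) (hM : IsUnit M.det) :
    ∃ ν : Fq[X], ν.map (algebraMap Fq F3) = rowPoly M 2 * conicCofactor Fq M :=
  FiniteField.exists_map_eq_of_map_frobeniusAlgHom
    (map_mul_conjCofactor (FiniteField.frobeniusAlgHom_cube h3) (rowPoly_ne_zero hM 2))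

theorem natDegree_conicCofactor_add_two_mem [Fintype F3]
    (h3 : Fintype.card F3 = Fintype.card Fq ^ 3) (hM : IsUnit M.det) :
    (conicCofactor Fq M).natDegree + 2 ∈ ({2, 3, 4, 6} : Set ℕ) :=
  natDegree_conjCofactor_add_two_mem (FiniteField.frobeniusAlgHom_cube h3)
    (rowPoly_ne_zero hM 2) (natDegree_rowPoly_le M 2)

theorem X_pow_mem_galoisSpan [Fintype F3] (h3 : Fintype.card F3 = Fintype.card Fq ^ 3)
    (hM : IsUnit M.det) {ν : Fq[X]}
    (hν : ν.map (algebraMap Fq F3) = rowPoly M 2 * conicCofactor Fq M) {i : ℕ}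
    (hi : i ≤ (conicCofactor Fq M).natDegree + 2) :
    (X : F3[X]) ^ i ∈ galoisSpan Fq F3 (rowPoly M 0 * conicCofactor Fq M)
      (rowPoly M 1 * conicCofactor Fq M) ν := by
  set W := galoisSpan Fq F3 (rowPoly M 0 * conicCofactor Fq M)
    (rowPoly M 1 * conicCofactor Fq M) ν
  set σ := FiniteField.frobeniusAlgHom Fq F3
  have hmem : ∀ φ : F3 →ₐ[Fq] F3, ∀ l : F3[X], l.natDegree ≤ 2 →
      l * (conicCofactor Fq M).map (φ : F3 →+* F3) ∈ W := by
    intro φ l hl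
    refine mul_mem_of_rowPoly_mul_mem (M := M.map (φ : F3 →+* F3)) ?_ (fun j => ?_) hl
    · rw [← RingHom.mapMatrix_apply, ← RingHom.map_det]
      exact hM.map _
    rw [← map_rowPoly, ← Polynomial.map_mul]
    fin_cases j
    · exact Submodule.subset_span (Or.inr ⟨φ, Or.inl rfl⟩)
    · exact Submodule.subset_span (Or.inr ⟨φ, Or.inr rfl⟩)
    · refine Submodule.subset_span (Or.inl ?_)
      change (rowPoly M 2 * conicCofactor Fq M).map (φ : F3 →+* F3) = _
      rw [← hν, map_map, AlgHom.comp_algebraMap]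
  obtain ⟨l0, l1, l2, hl0, hl1, hl2, hp⟩ := exists_combination_conjCofactor
    (FiniteField.frobeniusAlgHom_cube h3) (rowPoly_ne_zero hM 2) (natDegree_rowPoly_le M 2)
    (p := X ^ i) (by rw [natDegree_X_pow]; exact hi)
  rw [hp]
  refine W.add_mem (W.add_mem ?_ (hmem σ l1 hl1)) ?_
  · have := hmem (AlgHom.id Fq F3) l0 hl0
    rwa [AlgHom.id_toRingHom, Polynomial.map_id] at this
  · have := hmem (σ.comp σ) l2 hl2
    rwa [AlgHom.comp_toRingHom, ← map_map] at this

theorem eval_conicCofactor_ne_zero (hM : IsUnit M.det) (θ : Fq)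
    (h : M.mulVec (fun i => algebraMap Fq F3 (![1, θ, θ ^ 2] i)) 2 ≠ 0) :
    (conicCofactor Fq M).eval (algebraMap Fq F3 θ) ≠ 0 :=
  eval_conjCofactor_ne_zero (rowPoly_ne_zero hM 2)
    ((FiniteField.frobeniusAlgHom Fq F3).commutes θ) (by rwa [← mulVec_conicParam])

variable (Fq M) in
/-- `ν` stands for `rowPoly M 2 * conicCofactor Fq M` with its coefficients read in `F_q`. -/
def conicFrame (ν : Fq[X]) : Fin ((conicCofactor Fq M).natDegree + 2 + 1) → V6 Fq F3 :=
  coeffFrame Fq F3 _ (rowPoly M 0 * conicCofactor Fq M) (rowPoly M 1 * conicCofactor Fq M) ν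

variable {ν : Fq[X]} (hν : ν.map (algebraMap Fq F3) = rowPoly M 2 * conicCofactor Fq M)
include hν

theorem liesOver_sum_pow_smul_conicFrame (θ : Fq) :
    LiesOver Fq F3 ((conicCofactor Fq M).eval (algebraMap Fq F3 θ))
      (∑ i : Fin ((conicCofactor Fq M).natDegree + 2 + 1), θ ^ (i : ℕ) • conicFrame Fq M ν i)
      (M.mulVec fun i => algebraMap Fq F3 (![1, θ, θ ^ 2] i)) := by
  have hdeg : ∀ j, (rowPoly M j * conicCofactor Fq M).natDegree ≤
      (conicCofactor Fq M).natDegree + 2 := fun j =>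
    natDegree_mul_le.trans (by have := natDegree_rowPoly_le M j; omega)
  have hνdeg : ν.natDegree ≤ (conicCofactor Fq M).natDegree + 2 := by
    rw [← natDegree_map (algebraMap Fq F3), hν]; exact hdeg 2
  rw [conicFrame, sum_pow_smul_coeffFrame (hdeg 0) (hdeg 1) hνdeg]
  refine ⟨?_, ?_⟩
  · simp [mulVec_conicParam, eval_mul, mul_comm]
  · rw [← eval_map_apply, hν, eval_mul, mulVec_conicParam, mul_comm]

theorem liesOver_last_conicFrame :
    LiesOver Fq F3 (conicCofactor Fq M).leadingCoeff (conicFrame Fq M ν (Fin.last _))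
      (M.mulVec ![0, 0, 1]) := by
  have hcol : ∀ j, M.mulVec ![0, 0, 1] j = M j 2 := by
    intro j; simp [Matrix.mulVec, dotProduct, Fin.sum_univ_three]
  refine ⟨?_, ?_⟩
  · simp only [conicFrame, coeffFrame, Fin.val_last, coeff_rowPoly_mul_natDegree_add_two, hcol]
    simp only [mul_comm]
  · simp only [conicFrame, coeffFrame, Fin.val_last]
    rw [← coeff_map, hν, coeff_rowPoly_mul_natDegree_add_two, hcol, mul_comm]

end ConicCurve

theorem fqConic_corresponds_nrc_general (Fq F3 : Type) [Field Fq] [Field F3]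
    [Fintype Fq] [Fintype F3]
    [Algebra Fq F3]
    (h3 : Fintype.card F3 = Fintype.card Fq ^ 3)
    (M : Matrix (Fin 3) (Fin 3) F3) (hM : IsUnit M.det) :
    ∃ k ∈ ({2, 3, 4, 6} : Set ℕ), ∃ N : Set (Pt6 Fq F3),
      IsNRC Fq F3 k N ∧ corrBB Fq F3 (conicOf Fq F3 M) N := by
  obtain ⟨ν, hν⟩ := exists_map_eq_rowPoly_two_mul_conicCofactor h3 hM
  refine ⟨_, natDegree_conicCofactor_add_two_mem h3 hM, nrcPts6 Fq F3 (conicFrame Fq M ν),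
    ⟨_, linearIndependent_coeffFrame fun i hi => X_pow_mem_galoisSpan h3 hM hν hi, rfl⟩, ?_, ?_⟩
  · rintro Q (⟨θ, hQ⟩ | hQ)
    · obtain ⟨P, hP, hPu⟩ := exists_mem_conicOf_pe (Fq := Fq) hM (Or.inl ⟨θ, rfl⟩)
      exact mem_bbExact_of_liesOver hP hPu hQ (liesOver_sum_pow_smul_conicFrame hν θ)
    · obtain ⟨P, hP, hPu⟩ := exists_mem_conicOf_pe (Fq := Fq) hM (Or.inr rfl)
      exact mem_bbExact_of_liesOver hP hPu hQ (liesOver_last_conicFrame hν)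
  · intro Q hQ hQinf
    obtain ⟨P, ⟨u, hu, hPu⟩, x, y, hPxy, hQxy⟩ := exists_affine_of_mem_bbExact hQ hQinf
    rcases hu with ⟨θ, rfl⟩ | rfl
    · exact Or.inl ⟨θ, pe_of_liesOver hPu hPxy hQxy (liesOver_sum_pow_smul_conicFrame hν θ)
        (eval_conicCofactor_ne_zero hM θ)⟩
    · exact Or.inr (pe_of_liesOver hPu hPxy hQxy (liesOver_last_conicFrame hν)
        fun _ => leadingCoeff_ne_zero.2 (conjCofactor_ne_zero (rowPoly_ne_zero hM 2)))

/-- Corollary 4.7: every `F_q`-conic of PG(2,q³) corresponds, in the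
usual Bruck-Bose representation in PG(6,q), to a `k`-dim normal rational curve with
`k ∈ {2,3,4,6}`. -/
theorem fqConic_corresponds_nrc (Fq F3 F6 : Type) [Field Fq] [Field F3] [Field F6]
    [Fintype Fq] [Fintype F3] [Fintype F6]
    [Algebra Fq F3] [Algebra F3 F6] [Algebra Fq F6] [IsScalarTower Fq F3 F6]
    (h3 : Fintype.card F3 = Fintype.card Fq ^ 3)
    (h6 : Fintype.card F6 = Fintype.card Fq ^ 6)
    (M : Matrix (Fin 3) (Fin 3) F3) (hM : IsUnit M.det) :
    ∃ k ∈ ({2, 3, 4, 6} : Set ℕ), ∃ N : Set (Pt6 Fq F3),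
      IsNRC Fq F3 k N ∧ corrBB Fq F3 (conicOf Fq F3 M) N :=
  fqConic_corresponds_nrc_general Fq F3 h3 M hM
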